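/- arXiv:2212.05358 — 8 statements merged into one kernel-verified Lean document; each statement's English description precedes it below -/
import Mathlib

section
/- Let (X, ≼, △) be a partially ordered semigroup (△ commutative, associative, and monotone in each argument with respect to the partial order ≼). Define S₁ ⋆ S₂ = {x₁ △ x₂ | x₁ ∈ S₁, x₂ ∈ S₂} for S₁, S₂ ⊆ X, and let m(S) denote the set of minimal elements of S. Then for all finite subsets S₁, S₂ of X, m(S₁ ⋆ S₂) = m(S₁ ⋆ m(S₂)). -/
/-! Every element `a △ b` of `S₁ ⋆ S₂` lies above `a △ b'` for a minimal `b' ≤ b` of the finite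
set `S₂`, so `S₁ ⋆ m(S₂)` is a subset of `S₁ ⋆ S₂` that lies below every element of it;
such a subset has the same minimal elements as the whole set. -/

theorem Set.setOf_mem_and_forall_not_lt_eq {X : Type*} [Preorder X] (S : Set X) :
    {x | x ∈ S ∧ ∀ x' ∈ S, ¬ x' < x} = {x | Minimal (· ∈ S) x} := by
  ext x
  simp only [Set.mem_ofPred_eq, minimal_iff_forall_lt]
  exact and_congr_right fun _ ↦ ⟨fun h _ hlt hy ↦ h _ hy hlt, fun h _ hy hlt ↦ h hlt hy⟩

theorem Set.exists_le_mem_image2_of_forall_exists_le {X : Type*} [Preorder X]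
    (op : X → X → X) (hmono : ∀ x y z, y ≤ z → op x y ≤ op x z) {S₁ S₂ T : Set X}
    (hT : ∀ b ∈ S₂, ∃ b' ≤ b, b' ∈ T) :
    ∀ x ∈ Set.image2 op S₁ S₂, ∃ y ≤ x, y ∈ Set.image2 op S₁ T := by
  rintro _ ⟨a, ha, b, hb, rfl⟩
  obtain ⟨b', hb'b, hb'⟩ := hT b hb
  exact ⟨op a b', hmono a b' b hb'b, Set.mem_image2_of_mem ha hb'⟩

theorem min_elements_star_general {X : Type*} [PartialOrder X] (op : X → X → X)
    (hcomm : ∀ x y, op x y = op y x)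
    (hmono : ∀ x y z, x ≤ y → op x z ≤ op y z)
    (m : Set X → Set X)
    (hm : ∀ S : Set X, m S = {x | x ∈ S ∧ ∀ x' ∈ S, ¬ x' < x})
    (S₁ S₂ : Set X) (h₂ : S₂.Finite) :
    m (Set.image2 op S₁ S₂) = m (Set.image2 op S₁ (m S₂)) := by
  have hmono_right : ∀ x y z, y ≤ z → op x y ≤ op x z := fun x y z hyz ↦ by
    rw [hcomm x y, hcomm x z]
    exact hmono y z x hyz
  simp only [hm, Set.setOf_mem_and_forall_not_lt_eq]
  ext x
  exact minimal_iff_minimal_of_imp_of_forall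
    (fun _ hy ↦ Set.image2_subset_left (setOfPred_minimal_subset S₂) hy)
    (Set.exists_le_mem_image2_of_forall_exists_le op hmono_right
      fun _ hb ↦ h₂.isPWO.exists_le_minimal hb)

/-- In a partially ordered semigroup, with
`S₁ ⋆ S₂ = {x₁ △ x₂ | x₁ ∈ S₁, x₂ ∈ S₂}` and `m` the minimal-elements
operator, for finite subsets: `m (S₁ ⋆ S₂) = m (S₁ ⋆ m S₂)`. -/
theorem min_elements_star {X : Type*} [PartialOrder X] (op : X → X → X)
    (hcomm : ∀ x y, op x y = op y x)
    (hassoc : ∀ x y z, op (op x y) z = op x (op y z))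
    (hmono : ∀ x y z, x ≤ y → op x z ≤ op y z)
    (m : Set X → Set X)
    (hm : ∀ S : Set X, m S = {x | x ∈ S ∧ ∀ x' ∈ S, ¬ x' < x})
    (S₁ S₂ : Set X) (h₁ : S₁.Finite) (h₂ : S₂.Finite) :
    m (Set.image2 op S₁ S₂) = m (Set.image2 op S₁ (m S₂)) :=
  min_elements_star_general op hcomm hmono m hm S₁ S₂ h₂
end

section
/- Let (X, ≼, △) be a partially ordered semigroup with (X, ≼) having the property that every nonempty subset considered is finite. On the set AC_X of finite antichains of X, define S₁ ▽ S₂ = m(S₁ ∪ S₂) and S₁ ▵ S₂ = m({x₁ △ x₂ | x₁ ∈ S₁, x₂ ∈ S₂}), where m takes minimal elements. Then ▽ and ▵ are both commutative and associative, and ▵ distributes over ▽: S₁ ▵ (S₂ ▽ S₃) = (S₁ ▵ S₂) ▽ (S₁ ▵ S₃). -/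
/-! In a partial order the minimal elements of a set `S` depend only on its upper closure, and
when `S` is finite, `m S` has the same upper closure as `S`. Upper closure turns unions into
infima and, for a monotone operation, commutes with `Set.image2` in each argument. So every `m`
nested inside another `m` can be dropped, and the five identities reduce to commutativity and
associativity of `∪` and of `Set.image2 op`, and to distributivity of `Set.image2` over `∪`. -/

open Set

section PartialOrder

variable {α : Type*} [PartialOrder α] {s t : Set α}

def minimalElements (s : Set α) : Set α := {x | Minimal (· ∈ s) x}

theorem minimalElements_eq_sep (s : Set α) :
    minimalElements s = {x | x ∈ s ∧ ∀ x' ∈ s, ¬ x' < x} := by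
  ext x
  simp only [minimalElements, minimal_iff_forall_lt, mem_ofPred_eq]
  exact and_congr_right fun _ => ⟨fun h y hy hyx => h hyx hy, fun h y hyx hy => h y hy hyx⟩

theorem minimal_mem_upperClosure_iff {x : α} :
    Minimal (· ∈ upperClosure s) x ↔ Minimal (· ∈ s) x := by
  constructor
  · intro h
    obtain ⟨a, has, hax⟩ := mem_upperClosure.1 h.prop
    obtain rfl : x = a := h.eq_of_ge (subset_upperClosure has) hax
    exact ⟨has, fun y hy hyx => h.2 (subset_upperClosure hy) hyx⟩
  · intro h
    refine ⟨subset_upperClosure h.prop, fun y hy hyx => ?_⟩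
    obtain ⟨a, has, hay⟩ := mem_upperClosure.1 hy
    exact (h.2 has (hay.trans hyx)).trans hay

theorem minimalElements_congr (h : upperClosure s = upperClosure t) :
    minimalElements s = minimalElements t := by
  ext x
  change Minimal (· ∈ s) x ↔ Minimal (· ∈ t) x
  rw [← minimal_mem_upperClosure_iff, h, minimal_mem_upperClosure_iff]

theorem Set.Finite.upperClosure_minimalElements (hs : s.Finite) :
    upperClosure (minimalElements s) = upperClosure s := by
  refine SetLike.ext fun x => ?_
  simp only [mem_upperClosure]
  refine ⟨fun ⟨a, ha, hax⟩ => ⟨a, ha.prop, hax⟩, fun ⟨a, ha, hax⟩ => ?_⟩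
  obtain ⟨b, hba, hb⟩ := hs.exists_le_minimal ha
  exact ⟨b, hb, hba.trans hax⟩

theorem Set.Finite.minimalElements_minimalElements_union (hs : s.Finite) (t : Set α) :
    minimalElements (minimalElements s ∪ t) = minimalElements (s ∪ t) :=
  minimalElements_congr <| by
    rw [upperClosure_union, upperClosure_union, hs.upperClosure_minimalElements]

theorem Set.Finite.minimalElements_union_minimalElements (ht : t.Finite) (s : Set α) :
    minimalElements (s ∪ minimalElements t) = minimalElements (s ∪ t) := by
  rw [union_comm, ht.minimalElements_minimalElements_union, union_comm]

end PartialOrder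

section Image2

variable {α β γ : Type*} {f : α → β → γ} {s : Set α} {t : Set β}

theorem upperClosure_image2_upperClosure_left [Preorder α] [Preorder γ]
    (hf : ∀ b, Monotone (f · b)) :
    upperClosure (image2 f (upperClosure s) t) = upperClosure (image2 f s t) := by
  refine SetLike.ext fun x => ?_
  simp only [mem_upperClosure]
  refine ⟨?_, fun ⟨_, ⟨a, ha, b, hb, hab⟩, habx⟩ =>
    ⟨_, ⟨a, subset_upperClosure ha, b, hb, hab⟩, habx⟩⟩
  rintro ⟨_, ⟨a', ⟨a, ha, haa'⟩, b, hb, rfl⟩, hx⟩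
  exact ⟨f a b, mem_image2_of_mem ha hb, (hf b haa').trans hx⟩

theorem upperClosure_image2_upperClosure_right [Preorder β] [Preorder γ]
    (hf : ∀ a, Monotone (f a)) :
    upperClosure (image2 f s (upperClosure t)) = upperClosure (image2 f s t) := by
  simpa only [image2_swap f] using upperClosure_image2_upperClosure_left (f := fun b a => f a b) hf

variable [PartialOrder γ]

theorem Set.Finite.minimalElements_image2_minimalElements_left [PartialOrder α]
    (hf : ∀ b, Monotone (f · b)) (hs : s.Finite) (t : Set β) :
    minimalElements (image2 f (minimalElements s) t) = minimalElements (image2 f s t) :=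
  minimalElements_congr <| by
    rw [← upperClosure_image2_upperClosure_left hf, hs.upperClosure_minimalElements,
      upperClosure_image2_upperClosure_left hf]

theorem Set.Finite.minimalElements_image2_minimalElements_right [PartialOrder β]
    (hf : ∀ a, Monotone (f a)) (ht : t.Finite) (s : Set α) :
    minimalElements (image2 f s (minimalElements t)) = minimalElements (image2 f s t) :=
  minimalElements_congr <| by
    rw [← upperClosure_image2_upperClosure_right hf, ht.upperClosure_minimalElements,
      upperClosure_image2_upperClosure_right hf]

end Image2

theorem antichain_semiring_general {X : Type*} [PartialOrder X] (op : X → X → X)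
    (hcomm : ∀ x y, op x y = op y x)
    (hassoc : ∀ x y z, op (op x y) z = op x (op y z))
    (hmono : ∀ x y z, x ≤ y → op x z ≤ op y z)
    (m : Set X → Set X)
    (hm : ∀ S : Set X, m S = {x | x ∈ S ∧ ∀ x' ∈ S, ¬ x' < x})
    (S₁ S₂ S₃ : Set X)
    (h₁ : S₁.Finite) (h₂ : S₂.Finite) (h₃ : S₃.Finite) :
    (m (S₁ ∪ S₂) = m (S₂ ∪ S₁)) ∧
    (m (m (S₁ ∪ S₂) ∪ S₃) = m (S₁ ∪ m (S₂ ∪ S₃))) ∧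
    (m (Set.image2 op S₁ S₂) = m (Set.image2 op S₂ S₁)) ∧
    (m (Set.image2 op (m (Set.image2 op S₁ S₂)) S₃)
      = m (Set.image2 op S₁ (m (Set.image2 op S₂ S₃)))) ∧
    (m (Set.image2 op S₁ (m (S₂ ∪ S₃)))
      = m (m (Set.image2 op S₁ S₂) ∪ m (Set.image2 op S₁ S₃))) := by
  obtain rfl : m = minimalElements :=
    funext fun S => (hm S).trans (minimalElements_eq_sep S).symm
  have hmono_left : ∀ z, Monotone (op · z) := fun z x y h => hmono x y z h
  have hmono_right : ∀ z, Monotone (op z) := fun z x y h => by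
    simpa only [hcomm z] using hmono x y z h
  refine ⟨by rw [union_comm], ?_, by rw [image2_comm hcomm], ?_, ?_⟩
  · rw [(h₁.union h₂).minimalElements_minimalElements_union,
      (h₂.union h₃).minimalElements_union_minimalElements, union_assoc]
  · rw [(h₁.image2 op h₂).minimalElements_image2_minimalElements_left hmono_left,
      (h₂.image2 op h₃).minimalElements_image2_minimalElements_right hmono_right,
      image2_assoc hassoc]
  · rw [(h₂.union h₃).minimalElements_image2_minimalElements_right hmono_right,
      (h₁.image2 op h₂).minimalElements_minimalElements_union,
      (h₁.image2 op h₃).minimalElements_union_minimalElements, image2_union_right]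

/-- On finite antichains of a partially ordered semigroup,
the operations `S₁ ▽ S₂ = m (S₁ ∪ S₂)` and
`S₁ ▵ S₂ = m {x₁ △ x₂ | x₁ ∈ S₁, x₂ ∈ S₂}` are commutative and associative,
and `▵` distributes over `▽`. -/
theorem antichain_semiring {X : Type*} [PartialOrder X] (op : X → X → X)
    (hcomm : ∀ x y, op x y = op y x)
    (hassoc : ∀ x y z, op (op x y) z = op x (op y z))
    (hmono : ∀ x y z, x ≤ y → op x z ≤ op y z)
    (m : Set X → Set X)
    (hm : ∀ S : Set X, m S = {x | x ∈ S ∧ ∀ x' ∈ S, ¬ x' < x})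
    (S₁ S₂ S₃ : Set X)
    (h₁ : S₁.Finite) (h₂ : S₂.Finite) (h₃ : S₃.Finite)
    (ha₁ : IsAntichain (· ≤ ·) S₁) (ha₂ : IsAntichain (· ≤ ·) S₂)
    (ha₃ : IsAntichain (· ≤ ·) S₃) :
    (m (S₁ ∪ S₂) = m (S₂ ∪ S₁)) ∧
    (m (m (S₁ ∪ S₂) ∪ S₃) = m (S₁ ∪ m (S₂ ∪ S₃))) ∧
    (m (Set.image2 op S₁ S₂) = m (Set.image2 op S₂ S₁)) ∧
    (m (Set.image2 op (m (Set.image2 op S₁ S₂)) S₃)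
      = m (Set.image2 op S₁ (m (Set.image2 op S₂ S₃)))) ∧
    (m (Set.image2 op S₁ (m (S₂ ∪ S₃)))
      = m (m (Set.image2 op S₁ S₂) ∪ m (Set.image2 op S₁ S₃))) :=
  antichain_semiring_general op hcomm hassoc hmono m hm S₁ S₂ S₃ h₁ h₂ h₃
end

section
/- Let (X, ≼) be a linear order and let X be such that multisets of elements of X are well-defined. For k ∈ ℕ and a finite multiset M over X, let min^k(M) be the multiset of the k smallest elements of M (or M itself if |M| ≤ k). Then for all k ≤ m and all finite multisets M₁, M₂ over X: min^k(M₁ ⊎ M₂) = min^k(M₁ ⊎ min^m(M₂)), where ⊎ is multiset union. -/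
/-- The multiset of the `k` smallest elements of `M` (all of `M` if `|M| ≤ k`). -/
def minK {X : Type*} [LinearOrder X] (k : ℕ) (M : Multiset X) : Multiset X :=
  ((M.sort (· ≤ ·)).take k : List X)

/-!
A multiset over a linear order is determined by how many of its elements lie below `x` and
strictly below `x`, for every `x`. For a lower set `L`, the `k` smallest elements of `M` contain
exactly `min k |M ∩ L|` elements of `L`, and `min k (a + min m b) = min k (a + b)` when `k ≤ m`.
-/

theorem List.countP_take_of_pairwise {X : Type*} [Preorder X] {p : X → Bool}
    (hp : IsLowerSet {a | p a}) {l : List X} (hl : l.Pairwise (· ≤ ·)) (n : ℕ) :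
    (l.take n).countP p = min n (l.countP p) := by
  induction l generalizing n with
  | nil => simp
  | cons a l ih =>
    cases n with
    | zero => simp
    | succ n =>
      rw [List.pairwise_cons] at hl
      by_cases hpa : p a
      · simp only [List.take_succ_cons, List.countP_cons, hpa, if_true, ih hl.2 n]
        omega
      · have hl_none : l.countP p = 0 :=
          List.countP_eq_zero.2 fun b hb hpb => hpa (hp (hl.1 b hb) hpb)
        have htake_none : (l.take n).countP p = 0 :=
          Nat.eq_zero_of_le_zero (hl_none ▸ (List.take_sublist n l).countP_le)
        simp [hpa, hl_none, htake_none]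

namespace Multiset

variable {X : Type*} [LinearOrder X]

theorem countP_le_eq_countP_lt_add_count (x : X) (s : Multiset X) :
    s.countP (· ≤ x) = s.countP (· < x) + s.count x := by
  induction s using Multiset.induction_on with
  | empty => simp
  | cons a s ih =>
    simp only [countP_cons, count_cons, ih]
    rcases lt_trichotomy a x with h | rfl | h
    · simp [h, h.le, h.ne']
      omega
    · simp
      omega
    · simp [h.not_gt, h.not_ge, h.ne]

theorem ext_of_countP_le_of_countP_lt {s t : Multiset X}
    (hle : ∀ x, s.countP (· ≤ x) = t.countP (· ≤ x))
    (hlt : ∀ x, s.countP (· < x) = t.countP (· < x)) : s = t := by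
  ext x
  have hs := s.countP_le_eq_countP_lt_add_count x
  have ht := t.countP_le_eq_countP_lt_add_count x
  have := hle x
  have := hlt x
  omega

end Multiset

section minK

variable {X : Type*} [LinearOrder X] {p : X → Prop} [DecidablePred p]

theorem countP_minK (hp : IsLowerSet {a | p a}) (k : ℕ) (M : Multiset X) :
    (minK k M).countP p = min k (M.countP p) := by
  conv_rhs => rw [← Multiset.sort_eq M (· ≤ ·)]
  simp only [minK, Multiset.coe_countP]
  exact List.countP_take_of_pairwise (p := fun a => decide (p a)) (by simpa using hp)
    (Multiset.pairwise_sort M _) k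

theorem countP_minK_add_minK (hp : IsLowerSet {a | p a}) {k m : ℕ} (hkm : k ≤ m)
    (M₁ M₂ : Multiset X) :
    (minK k (M₁ + minK m M₂)).countP p = (minK k (M₁ + M₂)).countP p := by
  simp only [countP_minK hp, Multiset.countP_add]
  omega

end minK

/-- For `k ≤ m`:
`min^k (M₁ ⊎ M₂) = min^k (M₁ ⊎ min^m M₂)`. -/
theorem minK_add {X : Type*} [LinearOrder X] (k m : ℕ) (hkm : k ≤ m)
    (M₁ M₂ : Multiset X) :
    minK k (M₁ + M₂) = minK k (M₁ + minK m M₂) :=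
  Multiset.ext_of_countP_le_of_countP_lt
    (fun x => (countP_minK_add_minK (isLowerSet_Iic x) hkm M₁ M₂).symm)
    (fun x => (countP_minK_add_minK (isLowerSet_Iio x) hkm M₁ M₂).symm)
end

section
/- Let (X, ≼, △) be a linearly ordered semigroup and k ∈ ℕ. For finite multisets M₁, M₂ over X define M₁ ⋆ M₂ = {{x₁ △ x₂ | x₁ ∈ M₁, x₂ ∈ M₂}} (multiset of all pairwise combinations). Then for all k ≤ m: min^k(M₁ ⋆ M₂) = min^k(M₁ ⋆ min^m(M₂)). -/
/-- The multiset `{{x₁ △ x₂ | x₁ ∈ M₁, x₂ ∈ M₂}}` of all pairwise combinations. -/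
def mstar {X : Type*} (op : X → X → X) (M₁ M₂ : Multiset X) : Multiset X :=
  M₁.bind fun x₁ => M₂.map (op x₁)

section Aux
variable {X : Type*} [LinearOrder X]

lemma minK_le (k : ℕ) (M : Multiset X) : minK k M ≤ M := by
  conv_rhs => rw [← M.sort_eq (· ≤ ·)]
  exact ((List.take_sublist k _).subperm : _)

lemma minK_card (k : ℕ) (M : Multiset X) : (minK k M).card = min k (Multiset.card M) := by
  simp [minK]

lemma minK_add_drop (k : ℕ) (M : Multiset X) :
    minK k M + (((M.sort (· ≤ ·)).drop k : List X) : Multiset X) = M := by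
  rw [minK, Multiset.coe_add, List.take_append_drop, Multiset.sort_eq]

lemma minK_sub (k : ℕ) (M : Multiset X) :
    M - minK k M = (((M.sort (· ≤ ·)).drop k : List X) : Multiset X) := by
  symm
  exact eq_tsub_of_add_eq (by rw [add_comm]; exact minK_add_drop k M)

lemma minK_le_of_mem_sub {k : ℕ} {M : Multiset X} {x y : X}
    (hx : x ∈ minK k M) (hy : y ∈ M - minK k M) : x ≤ y := by
  rw [minK_sub] at hy
  rw [minK, Multiset.mem_coe] at hx
  rw [Multiset.mem_coe] at hy
  exact (M.pairwise_sort (· ≤ ·)).rel_of_mem_take_of_mem_drop hx hy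

lemma minK_eq_self {k : ℕ} {M : Multiset X} (h : Multiset.card M ≤ k) : minK k M = M := by
  rw [minK, List.take_of_length_le (by simpa using h), Multiset.sort_eq]

lemma countP_lt_of_mem_minK {k : ℕ} {M : Multiset X} {x : X} (hx : x ∈ minK k M) :
    M.countP (· < x) < k := by
  have hdec := minK_add_drop k M
  have h0 : (((M.sort (· ≤ ·)).drop k : List X) : Multiset X).countP (· < x) = 0 := by
    rw [Multiset.countP_eq_zero]
    intro y hy
    exact not_lt.2 (minK_le_of_mem_sub hx (by rw [minK_sub]; exact hy))
  have h1 : (minK k M).countP (· < x) < Multiset.card (minK k M) :=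
    lt_of_le_of_ne (Multiset.countP_le_card _ _)
      (fun he => lt_irrefl x (Multiset.countP_eq_card.mp he x hx))
  have h2 : Multiset.card (minK k M) ≤ k := by rw [minK_card]; omega
  calc M.countP (· < x) = (minK k M).countP (· < x) := by
        conv_lhs => rw [← hdec]
        rw [Multiset.countP_add, h0, add_zero]
    _ < k := lt_of_lt_of_le h1 h2

lemma exists_le_of_mem_minK {k : ℕ} {S A : Multiset X} {x : X}
    (hx : x ∈ minK k S) (hA : A ≤ S) (hcard : k ≤ Multiset.card A) :
    ∃ a ∈ A, x ≤ a := by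
  by_contra h
  push_neg at h
  have h1 : Multiset.card A ≤ S.countP (· < x) := by
    calc Multiset.card A = A.countP (· < x) :=
          (Multiset.countP_eq_card.mpr (fun a ha => h a ha)).symm
      _ ≤ S.countP (· < x) := Multiset.countP_le_of_le _ hA
  have := countP_lt_of_mem_minK hx
  omega

lemma eq_minK {k : ℕ} {M T : Multiset X} (hTM : T ≤ M)
    (hcard : Multiset.card T = min k (Multiset.card M))
    (hord : ∀ x ∈ T, ∀ y ∈ M - T, x ≤ y) : T = minK k M := by
  set S := minK k M with hS
  by_contra hne
  have hcards : Multiset.card T = Multiset.card S := by rw [hcard, minK_card]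
  have h1 : T - S ≠ 0 := by
    intro h0
    exact hne (Multiset.eq_of_le_of_card_le (tsub_eq_zero_iff_le.mp h0) (le_of_eq hcards.symm))
  have h2 : S - T ≠ 0 := by
    intro h0
    exact hne (Multiset.eq_of_le_of_card_le (tsub_eq_zero_iff_le.mp h0) (le_of_eq hcards)).symm
  obtain ⟨a, ha⟩ := Multiset.exists_mem_of_ne_zero h1
  obtain ⟨b, hb⟩ := Multiset.exists_mem_of_ne_zero h2
  have haT : a ∈ T := Multiset.mem_of_le (tsub_le_self) ha
  have hbS : b ∈ S := Multiset.mem_of_le (tsub_le_self) hb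
  have haMS : a ∈ M - S := Multiset.mem_of_le (tsub_le_tsub_right hTM S) ha
  have hbMT : b ∈ M - T := Multiset.mem_of_le (tsub_le_tsub_right (minK_le k M) T) hb
  have hba : b ≤ a := minK_le_of_mem_sub hbS haMS
  have hab : a ≤ b := hord a haT b hbMT
  have heq : a = b := le_antisymm hab hba
  have c1 : S.count a < T.count a := by
    have := Multiset.count_pos.2 ha
    rw [Multiset.count_sub] at this; omega
  have c2 : T.count a < S.count a := by
    have := Multiset.count_pos.2 hb
    rw [← heq, Multiset.count_sub] at this; omega
  omega

omit [LinearOrder X] in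
lemma mstar_add_right (op : X → X → X) (M₁ A B : Multiset X) :
    mstar op M₁ (A + B) = mstar op M₁ A + mstar op M₁ B := by
  simp [mstar, Multiset.map_add, Multiset.bind_add]

omit [LinearOrder X] in
lemma card_mstar (op : X → X → X) (M₁ M₂ : Multiset X) :
    Multiset.card (mstar op M₁ M₂) = Multiset.card M₁ * Multiset.card M₂ := by
  simp [mstar, Multiset.card_bind, mul_comm]

end Aux

/-- In a linearly ordered semigroup, for `k ≤ m`:
`min^k (M₁ ⋆ M₂) = min^k (M₁ ⋆ min^m M₂)`. -/
theorem minK_star {X : Type*} [LinearOrder X] (op : X → X → X)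
    (hcomm : ∀ x y, op x y = op y x)
    (hassoc : ∀ x y z, op (op x y) z = op x (op y z))
    (hmono : ∀ x y z, x ≤ y → op x z ≤ op y z)
    (k m : ℕ) (hkm : k ≤ m) (M₁ M₂ : Multiset X) :
    minK k (mstar op M₁ M₂) = minK k (mstar op M₁ (minK m M₂)) := by
  rcases le_or_gt (Multiset.card M₂) m with h | h
  · rw [minK_eq_self h]
  set M₂' := minK m M₂ with hM₂'
  have hc2 : Multiset.card M₂' = m := by rw [hM₂', minK_card]; omega
  have hle2 : M₂' ≤ M₂ := minK_le m M₂
  have hdecomp : mstar op M₁ M₂' + mstar op M₁ (M₂ - M₂') = mstar op M₁ M₂ := by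
    rw [← mstar_add_right, add_tsub_cancel_of_le hle2]
  have hTle : minK k (mstar op M₁ M₂') ≤ mstar op M₁ M₂' := minK_le _ _
  symm
  apply eq_minK
  · exact le_trans hTle (le_trans (Multiset.le_add_right _ _) (le_of_eq hdecomp))
  · rw [minK_card, card_mstar, card_mstar, hc2]
    rcases Nat.eq_zero_or_pos (Multiset.card M₁) with h1 | h1
    · simp [h1]
    · have : m ≤ Multiset.card M₁ * m := Nat.le_mul_of_pos_left m h1
      have : Multiset.card M₂ ≤ Multiset.card M₁ * Multiset.card M₂ :=
        Nat.le_mul_of_pos_left _ h1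
      omega
  · intro x hx y hy
    rw [← hdecomp, add_comm, add_tsub_assoc_of_le hTle, Multiset.mem_add] at hy
    rcases hy with hy | hy
    · -- y ∈ mstar op M₁ (M₂ - M₂')
      rw [mstar, Multiset.mem_bind] at hy
      obtain ⟨x₁, hx₁, hy⟩ := hy
      rw [Multiset.mem_map] at hy
      obtain ⟨y₂, hy₂, rfl⟩ := hy
      have hA : M₂'.map (op x₁) ≤ mstar op M₁ M₂' := Multiset.le_bind M₁ hx₁
      have hcA : k ≤ Multiset.card (M₂'.map (op x₁)) := by
        rw [Multiset.card_map, hc2]; exact hkm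
      obtain ⟨a, ha, hxa⟩ := exists_le_of_mem_minK hx hA hcA
      rw [Multiset.mem_map] at ha
      obtain ⟨y', hy', rfl⟩ := ha
      have : y' ≤ y₂ := minK_le_of_mem_sub hy' hy₂
      calc x ≤ op x₁ y' := hxa
        _ ≤ op x₁ y₂ := by rw [hcomm x₁ y', hcomm x₁ y₂]; exact hmono _ _ _ this
    · exact minK_le_of_mem_sub hx hy
end

section
/- Let (V, ▽, ▵) be an absorbing semiring attribute domain and let S be a finite nonempty family of nonempty finite subsets of a finite set B, and let α : B → V. Let min(S) be the family of inclusion-minimal elements of S, and suppose S is upward closed within its own members in the sense that every element of S contains some element of min(S). Then ▽_{A ∈ S} ▵_{a ∈ A} α(a) = ▽_{A ∈ min(S)} ▵_{a ∈ A} α(a). -/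
open scoped Classical

/-- In an absorbing semiring attribute domain, the metric
`▽_{A ∈ S} ▵_{a ∈ A} α a` over a family `S` equals the same metric over the
family `min S` of inclusion-minimal elements of `S`. -/
theorem absorbing_metric_min_suffices {ι V : Type*} [Fintype ι]
    (orOp andOp : V → V → V) (α : ι → V)
    (horc : ∀ x y, orOp x y = orOp y x)
    (hora : ∀ x y z, orOp (orOp x y) z = orOp x (orOp y z))
    (handc : ∀ x y, andOp x y = andOp y x)
    (handa : ∀ x y z, andOp (andOp x y) z = andOp x (andOp y z))
    (hdist : ∀ x y z, andOp x (orOp y z) = orOp (andOp x y) (andOp x z))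
    (habs : ∀ x y, orOp x (andOp x y) = x)
    (f : Finset ι → V)
    (hf₁ : ∀ a : ι, f {a} = α a)
    (hf₂ : ∀ (a : ι) (A : Finset ι), a ∉ A → A.Nonempty →
      f (insert a A) = andOp (α a) (f A))
    (g : Finset (Finset ι) → V)
    (hg₁ : ∀ A : Finset ι, g {A} = f A)
    (hg₂ : ∀ (A : Finset ι) (S : Finset (Finset ι)), A ∉ S → S.Nonempty →
      g (insert A S) = orOp (f A) (g S))
    (S : Finset (Finset ι)) (hSne : S.Nonempty)
    (hnonempty : ∀ A ∈ S, Finset.Nonempty A)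
    (hcover : ∀ A ∈ S, ∃ A₀ ∈ S.filter (fun A₀ => ∀ A' ∈ S, ¬ A' ⊂ A₀), A₀ ⊆ A) :
    g S = g (S.filter (fun A => ∀ A' ∈ S, ¬ A' ⊂ A)) := by
  classical
  -- f of a disjoint union
  have funion : ∀ (D A₀ : Finset ι), A₀.Nonempty → Disjoint A₀ D → D.Nonempty →
      f (A₀ ∪ D) = andOp (f D) (f A₀) := by
    intro D
    induction D using Finset.induction_on with
    | empty => intro A₀ _ _ h; exact absurd h (by simp)
    | @insert a D' ha ih =>
      intro A₀ hA₀ hdisj _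
      have haA : a ∉ A₀ := fun h =>
        (Finset.disjoint_left.mp hdisj h) (Finset.mem_insert_self a D')
      rcases D'.eq_empty_or_nonempty with rfl | hD'
      · simp only [Finset.union_insert, Finset.union_empty]
        rw [hf₂ a A₀ haA hA₀, show (insert a ∅ : Finset ι) = {a} from rfl, hf₁]
      · have haA₀ : a ∉ A₀ ∪ D' := by
          simp only [Finset.mem_union, not_or]; exact ⟨haA, ha⟩
        have hdisj' : Disjoint A₀ D' := hdisj.mono_right (Finset.subset_insert a D')
        have hne : (A₀ ∪ D').Nonempty := hA₀.mono Finset.subset_union_left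
        rw [Finset.union_insert, hf₂ a (A₀ ∪ D') haA₀ hne, ih A₀ hA₀ hdisj' hD',
          hf₂ a D' ha hD', handa]
  -- absorption for proper subsets
  have fabs : ∀ (A₀ A : Finset ι), A₀.Nonempty → A₀ ⊂ A →
      orOp (f A₀) (f A) = f A₀ := by
    intro A₀ A hA₀ hsub
    have hD : (A \ A₀).Nonempty := by
      rw [Finset.sdiff_nonempty]
      exact fun h => hsub.2 h
    have hdisj : Disjoint A₀ (A \ A₀) := Finset.disjoint_sdiff
    have hA : A₀ ∪ (A \ A₀) = A := Finset.union_sdiff_of_subset hsub.1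
    rw [← hA, funion _ _ hA₀ hdisj hD, handc, habs]
  -- orOp x absorbed by g U if some member of U absorbs x
  have gabs : ∀ (U : Finset (Finset ι)) (A₀ : Finset ι) (x : V), A₀ ∈ U →
      orOp x (f A₀) = f A₀ → orOp x (g U) = g U := by
    intro U A₀ x hmem hx
    rcases (U.erase A₀).eq_empty_or_nonempty with he | hne
    · have : U = {A₀} := by
        apply Finset.eq_singleton_iff_unique_mem.mpr
        refine ⟨hmem, fun b hb => ?_⟩
        by_contra hb'
        exact absurd (Finset.mem_erase.mpr ⟨hb', hb⟩) (by simp [he])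
      rw [this, hg₁, hx]
    · have hU : U = insert A₀ (U.erase A₀) := (Finset.insert_erase hmem).symm
      rw [hU, hg₂ A₀ _ (Finset.notMem_erase _ _) hne, ← hora, hx]
  set T := S.filter (fun A => ∀ A' ∈ S, ¬ A' ⊂ A) with hT
  have hTS : T ⊆ S := Finset.filter_subset _ _
  obtain ⟨B, hB⟩ := hSne
  obtain ⟨B₀, hB₀T, _⟩ := hcover B hB
  have hTne : T.Nonempty := ⟨B₀, hB₀T⟩
  -- key: any family between T and S has the same g
  have key : ∀ n (U : Finset (Finset ι)), U.card ≤ n → T ⊆ U → U ⊆ S → g U = g T := by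
    intro n
    induction n with
    | zero =>
      intro U hc hTU _
      have h1 : 0 < T.card := Finset.card_pos.mpr hTne
      have h2 : T.card ≤ U.card := Finset.card_le_card hTU
      omega
    | succ n ih =>
      intro U hc hTU hUS
      rcases eq_or_ne U T with rfl | hne
      · rfl
      · have : ∃ A ∈ U, A ∉ T := by
          by_contra h
          push_neg at h
          exact hne (Finset.Subset.antisymm h hTU)
        obtain ⟨A, hAU, hAT⟩ := this
        have hTU' : T ⊆ U.erase A := fun x hx =>
          Finset.mem_erase.mpr ⟨fun h => hAT (h ▸ hx), hTU hx⟩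
        have hne' : (U.erase A).Nonempty := hTne.mono hTU'
        have hU : U = insert A (U.erase A) := (Finset.insert_erase hAU).symm
        have hrec : g (U.erase A) = g T :=
          ih _ (by
            have := Finset.card_erase_of_mem hAU
            omega) hTU' (fun x hx => hUS (Finset.mem_of_mem_erase hx))
        rw [hU, hg₂ A _ (Finset.notMem_erase _ _) hne', hrec]
        obtain ⟨A₀, hA₀T, hA₀A⟩ := hcover A (hUS hAU)
        have hA₀ne : A₀.Nonempty := hnonempty A₀ (hTS hA₀T)
        have hssub : A₀ ⊂ A := lt_of_le_of_ne hA₀A (fun h => hAT (h ▸ hA₀T))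
        have habs' : orOp (f A) (f A₀) = f A₀ := by
          rw [horc]; exact fabs A₀ A hA₀ne hssub
        exact gabs T A₀ (f A) hA₀T habs'
  exact key S.card S le_rfl hTS Finset.Subset.rfl
end

section
/- Let T be a (possibly DAG-structured) binary static attack tree over leaves B, (V, ▽, ▵) a semiring attribute domain which is both idempotent (x ▽ x = x and x ▵ x = x) and absorbing (x ▽ (x ▵ y) = x), and α : B → V. Define BU(v) bottom-up by BU(a) = α(a), BU(OR(v₁,v₂)) = BU(v₁) ▽ BU(v₂), BU(AND(v₁,v₂)) = BU(v₁) ▵ BU(v₂). Let Suc(v) = {A ⊆ B | f(v,A) = ⊤} be the set of successful attacks on v. Then BU(v) = ▽_{A ∈ Suc(v)} ▵_{a ∈ A} α(a) for every node v. -/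
open scoped Classical

/-- Binary static attack trees over basic attack steps `B` (possibly
DAG-structured: subtrees and leaves may be shared). -/
inductive SAT (B : Type*) where
  | bas : B → SAT B
  | or : SAT B → SAT B → SAT B
  | and : SAT B → SAT B → SAT B

/-- The structure function: `reaches t A` iff attack `A` reaches node `t`. -/
def reaches {B : Type*} : SAT B → Finset B → Prop
  | .bas b, A => b ∈ A
  | .or l r, A => reaches l A ∨ reaches r A
  | .and l r, A => reaches l A ∧ reaches r A

/-- The set `Suc(t)` of successful attacks on `t`. -/
noncomputable def suc {B : Type*} [Fintype B] (t : SAT B) : Finset (Finset B) :=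
  Finset.univ.filter (fun A => reaches t A)

/-- Lift a binary operation to `Option`, with `none` acting as identity. -/
def lift {V : Type*} (op : V → V → V) : Option V → Option V → Option V
  | some x, some y => some (op x y)
  | some x, none => some x
  | none, y => y

/-- Iterate a commutative associative operation over a finite index set
(yielding `none` on the empty set). -/
noncomputable def bigOp {ι V : Type*} (op : V → V → V) (s : Finset ι)
    (f : ι → Option V) : Option V :=
  (s.toList.map f).foldr (lift op) none

/-- The bottom-up evaluation `BU`. -/
def bu {B V : Type*} (orOp andOp : V → V → V) (α : B → V) : SAT B → V
  | .bas a => α a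
  | .or l r => orOp (bu orOp andOp α l) (bu orOp andOp α r)
  | .and l r => andOp (bu orOp andOp α l) (bu orOp andOp α r)

/-!
An idempotent, absorbing semiring is a distributive lattice with `▽ = ⊔` and `▵ = ⊓` (the dual
absorption law `x ▵ (x ▽ y) = x` follows from distributivity and idempotence). Embedding it into
the bounded lattice `WithTop (WithBot V)`, the `Option`-valued big operators become `Finset.sup`
and `Finset.inf`, with `none` read as `⊥` resp. `⊤`. There the claim goes by induction on the
tree; at an AND node, distributivity expands `(⨆_{A ∈ Suc l} ⨅ A) ⊓ (⨆_{A' ∈ Suc r} ⨅ A')` into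
the join of `⨅ (A ∪ A')`, and every such union is a successful attack on the node, while every
successful attack `C` on it occurs as `C ∪ C`.
-/

abbrev DistribLattice.ofAbsorbing {V : Type*} (sup inf : V → V → V)
    (sup_comm : ∀ x y, sup x y = sup y x) (sup_assoc : ∀ x y z, sup (sup x y) z = sup x (sup y z))
    (inf_comm : ∀ x y, inf x y = inf y x) (inf_assoc : ∀ x y z, inf (inf x y) z = inf x (inf y z))
    (inf_sup_left : ∀ x y z, inf x (sup y z) = sup (inf x y) (inf x z))
    (inf_idem : ∀ x, inf x x = x) (sup_inf_self : ∀ x y, sup x (inf x y) = x) :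
    DistribLattice V :=
  letI : Max V := ⟨sup⟩
  letI : Min V := ⟨inf⟩
  letI : Lattice V := Lattice.mk' sup_comm sup_assoc inf_comm inf_assoc sup_inf_self
    fun x y => (inf_sup_left x x y).trans (by rw [inf_idem, sup_inf_self])
  DistribLattice.ofInfSupLe fun x y z => (inf_sup_left x y z).le

instance {V : Type*} (op : V → V → V) [Std.Commutative op] : Std.Commutative (lift op) :=
  ⟨by rintro (_ | x) (_ | y) <;> simp [lift, Std.Commutative.comm]⟩

instance {V : Type*} (op : V → V → V) [Std.Associative op] : Std.Associative (lift op) :=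
  ⟨by rintro (_ | x) (_ | y) (_ | z) <;> simp [lift, Std.Associative.assoc]⟩

section BigOp

variable {ι V M : Type*}

theorem bigOp_eq_fold (op : V → V → V) [Std.Commutative op] [Std.Associative op]
    (s : Finset ι) (f : ι → Option V) : bigOp op s f = s.fold (lift op) none f := by
  rw [bigOp, Finset.fold, ← Finset.coe_toList s, Multiset.map_coe, Multiset.coe_fold_r]

theorem map_bigOp (op : V → V → V) [Std.Commutative op] [Std.Associative op]
    {op' : M → M → M} [Std.Commutative op'] [Std.Associative op'] (φ : Option V → M)
    (hφ : ∀ x y, φ (lift op x y) = op' (φ x) (φ y)) (s : Finset ι) (f : ι → Option V) :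
    φ (bigOp op s f) = s.fold op' (φ none) (φ ∘ f) := by
  rw [bigOp_eq_fold, ← Finset.fold_hom hφ]
  rfl

theorem elim_bigOp_sup [SemilatticeSup V] [SemilatticeSup M] [OrderBot M] (φ : V → M)
    (hφ : ∀ x y, φ (x ⊔ y) = φ x ⊔ φ y) (s : Finset ι) (f : ι → Option V) :
    (bigOp (· ⊔ ·) s f).elim ⊥ φ = s.sup fun i => (f i).elim ⊥ φ :=
  map_bigOp _ (fun o => o.elim ⊥ φ)
    (by rintro (_ | x) (_ | y) <;> simp [lift, hφ]) s f

theorem elim_bigOp_inf [SemilatticeInf V] [SemilatticeInf M] [OrderTop M] (φ : V → M)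
    (hφ : ∀ x y, φ (x ⊓ y) = φ x ⊓ φ y) (s : Finset ι) (f : ι → Option V) :
    (bigOp (· ⊓ ·) s f).elim ⊤ φ = s.inf fun i => (f i).elim ⊤ φ :=
  map_bigOp _ (fun o => o.elim ⊤ φ)
    (by rintro (_ | x) (_ | y) <;> simp [lift, hφ]) s f

end BigOp

theorem map_bu {B V W : Type*} {orOp andOp : V → V → V} {orOp' andOp' : W → W → W}
    (φ : V → W) (hor : ∀ x y, φ (orOp x y) = orOp' (φ x) (φ y))
    (hand : ∀ x y, φ (andOp x y) = andOp' (φ x) (φ y)) (α : B → V) (t : SAT B) :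
    φ (bu orOp andOp α t) = bu orOp' andOp' (φ ∘ α) t := by
  induction t with
  | bas a => rfl
  | or l r ihl ihr => rw [bu, bu, hor, ihl, ihr]
  | and l r ihl ihr => rw [bu, bu, hand, ihl, ihr]

section Suc

variable {B : Type*}

theorem reaches_mono {t : SAT B} {A A' : Finset B} (h : A ⊆ A') (hA : reaches t A) :
    reaches t A' := by
  induction t with
  | bas b => exact h hA
  | or l r ihl ihr => exact hA.imp ihl ihr
  | and l r ihl ihr => exact hA.imp ihl ihr

theorem not_reaches_empty (t : SAT B) : ¬ reaches t ∅ := by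
  induction t with
  | bas b => exact Finset.notMem_empty b
  | or l r ihl ihr => exact not_or.2 ⟨ihl, ihr⟩
  | and l r ihl _ => exact fun h => ihl h.1

variable [Fintype B]

@[simp]
theorem mem_suc {t : SAT B} {A : Finset B} : A ∈ suc t ↔ reaches t A := by
  simp [suc]

theorem nonempty_of_mem_suc {t : SAT B} {A : Finset B} (h : A ∈ suc t) : A.Nonempty :=
  Finset.nonempty_iff_ne_empty.2 fun hA => not_reaches_empty t (hA ▸ mem_suc.1 h)

theorem suc_or (l r : SAT B) : suc (.or l r) = suc l ∪ suc r := by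
  ext A; simp [reaches]

theorem suc_and (l r : SAT B) : suc (.and l r) = suc l ∩ suc r := by
  ext A; simp [reaches]

theorem union_mem_suc_and {l r : SAT B} {A A' : Finset B} (hA : A ∈ suc l) (hA' : A' ∈ suc r) :
    A ∪ A' ∈ suc (.and l r) :=
  mem_suc.2 ⟨reaches_mono Finset.subset_union_left (mem_suc.1 hA),
    reaches_mono Finset.subset_union_right (mem_suc.1 hA')⟩

end Suc

section DistribLattice

variable {B L : Type*} [Fintype B] [DistribLattice L] [BoundedOrder L] (α : B → L)

theorem sup_suc_bas_inf (b : B) : (suc (.bas b)).sup (fun A => A.inf α) = α b := by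
  have hb : {b} ∈ suc (.bas b) := mem_suc.2 (Finset.mem_singleton_self b)
  refine le_antisymm (Finset.sup_le fun _ hA => Finset.inf_le (mem_suc.1 hA)) ?_
  simpa using Finset.le_sup (f := fun A => A.inf α) hb

theorem sup_suc_and_inf (l r : SAT B) :
    (suc (.and l r)).sup (fun A => A.inf α) =
      (suc l).sup (fun A => A.inf α) ⊓ (suc r).sup (fun A => A.inf α) := by
  refine le_antisymm (Finset.sup_le fun C hC => ?_) ?_
  · rw [suc_and, Finset.mem_inter] at hC
    exact le_inf (Finset.le_sup hC.1) (Finset.le_sup hC.2)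
  · rw [Finset.sup_inf_sup]
    refine Finset.sup_le fun ⟨A, A'⟩ hAA' => ?_
    rw [Finset.mem_product] at hAA'
    rw [← Finset.inf_union]
    exact Finset.le_sup (f := fun A => A.inf α) (union_mem_suc_and hAA'.1 hAA'.2)

theorem bu_eq_sup_suc_inf (t : SAT B) :
    bu (· ⊔ ·) (· ⊓ ·) α t = (suc t).sup fun A => A.inf α := by
  induction t with
  | bas b => exact (sup_suc_bas_inf α b).symm
  | or l r ihl ihr => rw [bu, suc_or, Finset.sup_union, ihl, ihr]
  | and l r ihl ihr => rw [bu, sup_suc_and_inf, ihl, ihr]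

end DistribLattice

theorem some_bu_eq_bigOp_sup_inf {B V : Type*} [Fintype B] [DistribLattice V] (α : B → V)
    (t : SAT B) :
    some (bu (· ⊔ ·) (· ⊓ ·) α t) =
      bigOp (· ⊔ ·) (suc t) (fun A => bigOp (· ⊓ ·) A (fun a => some (α a))) := by
  let ι : V → WithTop (WithBot V) := fun x => ((x : WithBot V) : WithTop (WithBot V))
  have ι_sup (x y : V) : ι (x ⊔ y) = ι x ⊔ ι y := by simp [ι]
  have ι_inf (x y : V) : ι (x ⊓ y) = ι x ⊓ ι y := by simp [ι]
  have elim_bot_injective : Function.Injective fun o : Option V => o.elim ⊥ ι := by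
    rintro (_ | x) (_ | y) h <;> simp_all [ι]
  refine elim_bot_injective ?_
  calc ι (bu (· ⊔ ·) (· ⊓ ·) α t)
      = (suc t).sup fun A => A.inf (ι ∘ α) := by
        rw [map_bu ι ι_sup ι_inf, bu_eq_sup_suc_inf]
    _ = (suc t).sup fun A => (bigOp (· ⊓ ·) A fun a => some (α a)).elim ⊥ ι := by
        refine Finset.sup_congr rfl fun A hA => ?_
        obtain ⟨a, ha⟩ := nonempty_of_mem_suc hA
        have hinf := elim_bigOp_inf ι ι_inf A fun a => some (α a)
        -- `A` is nonempty, so its meet is not `⊤`: the inner big operator is not `none`.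
        have hne : A.inf (ι ∘ α) ≠ ⊤ := ne_top_of_le_ne_top (by simp [ι]) (Finset.inf_le ha)
        generalize bigOp (· ⊓ ·) A (fun a => some (α a)) = o at hinf ⊢
        cases o
        exacts [absurd hinf.symm hne, hinf.symm]
    _ = _ := (elim_bigOp_sup ι ι_sup _ _).symm

theorem bu_eq_suc_metric_general {B V : Type*} [Fintype B]
    (orOp andOp : V → V → V) (α : B → V)
    (horc : ∀ x y, orOp x y = orOp y x)
    (hora : ∀ x y z, orOp (orOp x y) z = orOp x (orOp y z))
    (handc : ∀ x y, andOp x y = andOp y x)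
    (handa : ∀ x y z, andOp (andOp x y) z = andOp x (andOp y z))
    (hdist : ∀ x y z, andOp x (orOp y z) = orOp (andOp x y) (andOp x z))
    (hidem_and : ∀ x, andOp x x = x)
    (habs : ∀ x y, orOp x (andOp x y) = x) :
    ∀ v : SAT B,
      some (bu orOp andOp α v) =
        bigOp orOp (suc v) (fun A => bigOp andOp A (fun a => some (α a))) := by
  let _ := DistribLattice.ofAbsorbing orOp andOp horc hora handc handa hdist hidem_and habs
  exact some_bu_eq_bigOp_sup_inf α

/-- For a (possibly DAG-structured) binary static attack tree
and an idempotent, absorbing semiring attribute domain `(V, ▽, ▵)`, the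
bottom-up value at every node `v` equals `▽_{A ∈ Suc(v)} ▵_{a ∈ A} α a`. -/
theorem bu_eq_suc_metric {B V : Type*} [Fintype B]
    (orOp andOp : V → V → V) (α : B → V)
    (horc : ∀ x y, orOp x y = orOp y x)
    (hora : ∀ x y z, orOp (orOp x y) z = orOp x (orOp y z))
    (handc : ∀ x y, andOp x y = andOp y x)
    (handa : ∀ x y z, andOp (andOp x y) z = andOp x (andOp y z))
    (hdist : ∀ x y z, andOp x (orOp y z) = orOp (andOp x y) (andOp x z))
    (hidem_or : ∀ x, orOp x x = x)
    (hidem_and : ∀ x, andOp x x = x)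
    (habs : ∀ x y, orOp x (andOp x y) = x)
    (hne : ∀ v : SAT B, (suc v).Nonempty) :
    ∀ v : SAT B,
      some (bu orOp andOp α v) =
        bigOp orOp (suc v) (fun A => bigOp andOp A (fun a => some (α a))) :=
  bu_eq_suc_metric_general orOp andOp α horc hora handc handa hdist hidem_and habs
end

section
/- Let O₁ = (X₁, ≺₁) and O₂ = (X₂, ≺₂) be nonempty finite strict posets with disjoint carriers, x₁ ∈ X₁, and O = O₁[x₁/O₂] the insertion poset. Then the set of maximal chains of O equals {C₁ | C₁ a maximal chain of O₁ with x₁ ∉ C₁} ∪ {C₁[x₁/C₂] | C₁ a maximal chain of O₁ with x₁ ∈ C₁, C₂ a maximal chain of O₂}, where C₁[x₁/C₂] is the chain obtained by replacing the occurrence of x₁ in C₁ by the chain C₂. -/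
/-- The insertion relation of `O₁[x₁/O₂]` on `(X₁ \ {x₁}) ∪ X₂`. -/
def insRel {α : Type*} (X₁ X₂ : Set α) (r₁ r₂ : α → α → Prop) (x₁ : α)
    (x x' : α) : Prop :=
  (x ∈ X₁ \ {x₁} ∧ x' ∈ X₁ \ {x₁} ∧ r₁ x x') ∨
  (x ∈ X₂ ∧ x' ∈ X₂ ∧ r₂ x x') ∨
  (x ∈ X₁ \ {x₁} ∧ x' ∈ X₂ ∧ r₁ x x₁) ∨
  (x ∈ X₂ ∧ x' ∈ X₁ \ {x₁} ∧ r₁ x₁ x')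

/-- `C` is a maximal chain of the relation `r` within the carrier `S`. -/
def MaxChainOn {α : Type*} (r : α → α → Prop) (S C : Set α) : Prop :=
  C ⊆ S ∧ IsChain r C ∧
    ∀ C', C ⊆ C' → C' ⊆ S → IsChain r C' → C' = C

/-- Any chain inside a carrier extends to a maximal chain (Zorn). -/
lemma exists_maxChainOn {α : Type*} (r : α → α → Prop) (S C : Set α)
    (hCS : C ⊆ S) (hC : IsChain r C) : ∃ M, C ⊆ M ∧ MaxChainOn r S M := by
  have key : ∀ c ⊆ {D | D ⊆ S ∧ IsChain r D}, IsChain (· ⊆ ·) c → c.Nonempty →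
      ∃ ub ∈ {D | D ⊆ S ∧ IsChain r D}, ∀ s ∈ c, s ⊆ ub := by
    intro c hc hchain hne
    refine ⟨⋃₀ c, ⟨?_, ?_⟩, fun s hs => Set.subset_sUnion_of_mem hs⟩
    · exact Set.sUnion_subset fun s hs => (hc hs).1
    · intro x hx y hy hxy
      obtain ⟨s, hs, hxs⟩ := hx
      obtain ⟨t, ht, hyt⟩ := hy
      rcases eq_or_ne s t with rfl | hst
      · exact (hc hs).2 hxs hyt hxy
      · rcases hchain hs ht hst with h | h
        · exact (hc ht).2 (h hxs) hyt hxy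
        · exact (hc hs).2 hxs (h hyt) hxy
  obtain ⟨M, hCM, hMmem, hMmax⟩ :=
    zorn_subset_nonempty {D | D ⊆ S ∧ IsChain r D} key C ⟨hCS, hC⟩
  exact ⟨M, hCM, hMmem.1, hMmem.2,
    fun C' hMC' hC'S hC'chain => subset_antisymm (hMmax ⟨hC'S, hC'chain⟩ hMC') hMC'⟩

/-- The maximal chains of the insertion `O₁[x₁/O₂]` are the
maximal chains of `O₁` avoiding `x₁`, together with the chains
`C₁[x₁/C₂] = (C₁ \ {x₁}) ∪ C₂` for `C₁` a maximal chain of `O₁` through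
`x₁` and `C₂` a maximal chain of `O₂`. -/
theorem maxChains_insertion {α : Type*} (X₁ X₂ : Set α)
    (r₁ r₂ : α → α → Prop) (x₁ : α)
    (hfin₁ : X₁.Finite) (hfin₂ : X₂.Finite)
    (hne₁ : X₁.Nonempty) (hne₂ : X₂.Nonempty)
    (hdis : Disjoint X₁ X₂) (hx₁ : x₁ ∈ X₁)
    (hsup₁ : ∀ a b, r₁ a b → a ∈ X₁ ∧ b ∈ X₁)
    (hirr₁ : ∀ a, ¬ r₁ a a)
    (htr₁ : ∀ a b c, r₁ a b → r₁ b c → r₁ a c)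
    (hsup₂ : ∀ a b, r₂ a b → a ∈ X₂ ∧ b ∈ X₂)
    (hirr₂ : ∀ a, ¬ r₂ a a)
    (htr₂ : ∀ a b c, r₂ a b → r₂ b c → r₂ a c) :
    {C : Set α | MaxChainOn (insRel X₁ X₂ r₁ r₂ x₁) ((X₁ \ {x₁}) ∪ X₂) C} =
      {C : Set α | MaxChainOn r₁ X₁ C ∧ x₁ ∉ C} ∪
      {C : Set α | ∃ C₁ C₂ : Set α, MaxChainOn r₁ X₁ C₁ ∧ x₁ ∈ C₁ ∧
        MaxChainOn r₂ X₂ C₂ ∧ C = (C₁ \ {x₁}) ∪ C₂} := by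
  set r := insRel X₁ X₂ r₁ r₂ x₁ with hr
  set S := (X₁ \ {x₁}) ∪ X₂ with hS
  -- basic disjointness facts
  have h12 : ∀ a, a ∈ X₁ → a ∉ X₂ := fun a ha => Set.disjoint_left.mp hdis ha
  -- extraction lemmas for insRel
  have hr11 : ∀ a b, a ∈ X₁ \ {x₁} → b ∈ X₁ \ {x₁} → r a b → r₁ a b := by
    rintro a b ha hb (⟨_, _, h⟩ | ⟨h2, _, _⟩ | ⟨_, h2, _⟩ | ⟨h2, _, _⟩)
    · exact h
    · exact absurd h2 (h12 a ha.1)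
    · exact absurd h2 (h12 b hb.1)
    · exact absurd h2 (h12 a ha.1)
  have hr22 : ∀ a b, a ∈ X₂ → b ∈ X₂ → r a b → r₂ a b := by
    rintro a b ha hb (⟨h1, _, _⟩ | ⟨_, _, h⟩ | ⟨h1, _, _⟩ | ⟨_, h1, _⟩)
    · exact absurd ha (h12 a h1.1)
    · exact h
    · exact absurd ha (h12 a h1.1)
    · exact absurd hb (h12 b h1.1)
  have hr12 : ∀ a b, a ∈ X₁ \ {x₁} → b ∈ X₂ → r a b → r₁ a x₁ := by
    rintro a b ha hb (⟨_, h1, _⟩ | ⟨h2, _, _⟩ | ⟨_, _, h⟩ | ⟨h2, _, _⟩)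
    · exact absurd hb (h12 b h1.1)
    · exact absurd h2 (h12 a ha.1)
    · exact h
    · exact absurd h2 (h12 a ha.1)
  have hr21 : ∀ a b, a ∈ X₂ → b ∈ X₁ \ {x₁} → r a b → r₁ x₁ b := by
    rintro a b ha hb (⟨h1, _, _⟩ | ⟨_, h2, _⟩ | ⟨h1, _, _⟩ | ⟨_, _, h⟩)
    · exact absurd ha (h12 a h1.1)
    · exact absurd h2 (h12 b hb.1)
    · exact absurd ha (h12 a h1.1)
    · exact h
  -- a nonempty maximal r₂-chain fact
  have hC₂ne : ∀ C₂, MaxChainOn r₂ X₂ C₂ → C₂.Nonempty := by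
    intro C₂ ⟨hsub, hch, hmax⟩
    rcases Set.eq_empty_or_nonempty C₂ with rfl | h
    · obtain ⟨y, hy⟩ := hne₂
      have := hmax {y} (Set.empty_subset _) (Set.singleton_subset_iff.mpr hy)
        (Set.subsingleton_singleton.isChain)
      exact absurd this (Set.singleton_ne_empty y)
    · exact h
  -- given a chain of r₁ through x₁-comparable elements avoiding x₁,
  -- together with an r₂ chain, the union is an r-chain
  have mixChain : ∀ (A B : Set α), A ⊆ X₁ \ {x₁} → B ⊆ X₂ →
      (∀ a ∈ A, r₁ a x₁ ∨ r₁ x₁ a) →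
      (∀ a ∈ A, ∀ b ∈ A, a ≠ b → r₁ a b ∨ r₁ b a) →
      IsChain r₂ B → IsChain r (A ∪ B) := by
    intro A B hA hB hcmp hAch hBch x hx y hy hxy
    rcases hx with hxA | hxB
    · rcases hy with hyA | hyB
      · rcases hAch x hxA y hyA hxy with h | h
        · exact Or.inl (Or.inl ⟨hA hxA, hA hyA, h⟩)
        · exact Or.inr (Or.inl ⟨hA hyA, hA hxA, h⟩)
      · rcases hcmp x hxA with h | h
        · exact Or.inl (Or.inr (Or.inr (Or.inl ⟨hA hxA, hB hyB, h⟩)))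
        · exact Or.inr (Or.inr (Or.inr (Or.inr ⟨hB hyB, hA hxA, h⟩)))
    · rcases hy with hyA | hyB
      · rcases hcmp y hyA with h | h
        · exact Or.inr (Or.inr (Or.inr (Or.inl ⟨hA hyA, hB hxB, h⟩)))
        · exact Or.inl (Or.inr (Or.inr (Or.inr ⟨hB hxB, hA hyA, h⟩)))
      · rcases hBch hxB hyB hxy with h | h
        · exact Or.inl (Or.inr (Or.inl ⟨hB hxB, hB hyB, h⟩))
        · exact Or.inr (Or.inr (Or.inl ⟨hB hyB, hB hxB, h⟩))
  ext C
  simp only [Set.mem_setOf_eq, Set.mem_union]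
  constructor
  · rintro ⟨hCS, hCch, hCmax⟩
    rcases Set.eq_empty_or_nonempty (C ∩ X₂) with hempty | ⟨y₂, hy₂C, hy₂X⟩
    · -- C avoids X₂, hence is a maximal r₁-chain avoiding x₁
      left
      have hC1 : C ⊆ X₁ \ {x₁} := by
        intro c hc
        rcases hCS hc with h | h
        · exact h
        · exact absurd (Set.mem_inter hc h) (Set.eq_empty_iff_forall_notMem.mp hempty c)
      refine ⟨⟨fun c hc => (hC1 hc).1, fun a ha b hb hab => ?_, ?_⟩, fun h => (hC1 h).2 rfl⟩
      · rcases hCch ha hb hab with h | h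
        · exact Or.inl (hr11 a b (hC1 ha) (hC1 hb) h)
        · exact Or.inr (hr11 b a (hC1 hb) (hC1 ha) h)
      · intro C' hCC' hC'X hC'ch
        by_cases hx₁C' : x₁ ∈ C'
        · -- contradiction: we could glue a maximal r₂-chain onto C
          exfalso
          obtain ⟨M₂, _, hM₂⟩ := exists_maxChainOn r₂ X₂ ∅ (Set.empty_subset _)
            (by simp [IsChain])
          obtain ⟨y, hyM₂⟩ := hC₂ne M₂ hM₂
          have hch : IsChain r (C ∪ M₂) := by
            refine mixChain C M₂ hC1 hM₂.1 (fun a ha => ?_)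
              (fun a ha b hb hab => ?_) hM₂.2.1
            · rcases hC'ch (hCC' ha) hx₁C' (hC1 ha).2 with h | h
              · exact Or.inl h
              · exact Or.inr h
            · exact hC'ch (hCC' ha) (hCC' hb) hab
          have := hCmax (C ∪ M₂) Set.subset_union_left
            (Set.union_subset (fun c hc => Or.inl (hC1 hc))
              (fun c hc => Or.inr (hM₂.1 hc))) hch
          have hyC : y ∈ C := this ▸ Or.inr hyM₂
          exact h12 y (hC1 hyC).1 (hM₂.1 hyM₂)
        · -- C' avoids x₁, so it is an r-chain containing C
          apply hCmax C' hCC' (fun c hc => Or.inl ⟨hC'X hc, fun h => hx₁C' (h ▸ hc)⟩)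
          intro a ha b hb hab
          have ha' : a ∈ X₁ \ {x₁} := ⟨hC'X ha, fun h => hx₁C' (h ▸ ha)⟩
          have hb' : b ∈ X₁ \ {x₁} := ⟨hC'X hb, fun h => hx₁C' (h ▸ hb)⟩
          rcases hC'ch ha hb hab with h | h
          · exact Or.inl (Or.inl ⟨ha', hb', h⟩)
          · exact Or.inr (Or.inl ⟨hb', ha', h⟩)
    · -- C meets X₂
      right
      set C₂ := C ∩ X₂ with hC₂def
      set C₁ := (C ∩ (X₁ \ {x₁})) ∪ {x₁} with hC₁def
      have hC₂sub : C₂ ⊆ X₂ := Set.inter_subset_right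
      have hCsplit : C = (C ∩ (X₁ \ {x₁})) ∪ C₂ := by
        ext c
        constructor
        · intro hc
          rcases hCS hc with h | h
          · exact Or.inl ⟨hc, h⟩
          · exact Or.inr ⟨hc, h⟩
        · rintro (⟨h, _⟩ | ⟨h, _⟩) <;> exact h
      -- comparability of elements of C ∩ (X₁ \ {x₁}) with x₁
      have hcmp : ∀ a ∈ C ∩ (X₁ \ {x₁}), r₁ a x₁ ∨ r₁ x₁ a := by
        rintro a ⟨haC, haX⟩
        have hane : a ≠ y₂ := fun h => h12 a haX.1 (h ▸ hy₂X)
        rcases hCch haC hy₂C hane with h | h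
        · exact Or.inl (hr12 a y₂ haX hy₂X h)
        · exact Or.inr (hr21 y₂ a hy₂X haX h)
      have hC₂ch : IsChain r₂ C₂ := by
        rintro a ⟨haC, haX⟩ b ⟨hbC, hbX⟩ hab
        rcases hCch haC hbC hab with h | h
        · exact Or.inl (hr22 a b haX hbX h)
        · exact Or.inr (hr22 b a hbX haX h)
      have hC₁ch : IsChain r₁ C₁ := by
        rintro a (haC | ha) b (hbC | hb) hab
        · rcases hCch haC.1 hbC.1 hab with h | h
          · exact Or.inl (hr11 a b haC.2 hbC.2 h)
          · exact Or.inr (hr11 b a hbC.2 haC.2 h)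
        · rcases hcmp a haC with h | h
          · exact Or.inl (hb ▸ h)
          · exact Or.inr (hb ▸ h)
        · rcases hcmp b hbC with h | h
          · exact Or.inr (ha ▸ h)
          · exact Or.inl (ha ▸ h)
        · exact absurd (ha.trans hb.symm) hab
      have hx₁C₁ : x₁ ∈ C₁ := Or.inr rfl
      have hC₁sub : C₁ ⊆ X₁ := by
        rintro a (haC | ha)
        · exact haC.2.1
        · exact ha ▸ hx₁
      refine ⟨C₁, C₂, ⟨hC₁sub, hC₁ch, ?_⟩, hx₁C₁, ⟨hC₂sub, hC₂ch, ?_⟩, ?_⟩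
      · -- maximality of C₁
        intro C₁' hC₁C₁' hC₁'X hC₁'ch
        have hch : IsChain r ((C₁' \ {x₁}) ∪ C₂) := by
          refine mixChain _ _ (fun a ha => ⟨hC₁'X ha.1, ha.2⟩) hC₂sub
            (fun a ha => hC₁'ch ha.1 (hC₁C₁' hx₁C₁) ha.2)
            (fun a ha b hb hab => hC₁'ch ha.1 hb.1 hab) hC₂ch
        have hCC'' : C ⊆ (C₁' \ {x₁}) ∪ C₂ := by
          rw [hCsplit]
          apply Set.union_subset_union_left
          rintro a ⟨haC, haX⟩
          exact ⟨hC₁C₁' (Or.inl ⟨haC, haX⟩), haX.2⟩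
        have heq := hCmax ((C₁' \ {x₁}) ∪ C₂) hCC''
          (Set.union_subset (fun a ha => Or.inl ⟨hC₁'X ha.1, ha.2⟩)
            (fun a ha => Or.inr (hC₂sub ha))) hch
        apply subset_antisymm _ hC₁C₁'
        intro a ha
        by_cases hax : a = x₁
        · exact Or.inr hax
        · have haC : a ∈ C := heq ▸ Or.inl ⟨ha, hax⟩
          rcases hCS haC with h | h
          · exact Or.inl ⟨haC, h⟩
          · exact absurd h (h12 a (hC₁'X ha))
      · -- maximality of C₂
        intro C₂' hC₂C₂' hC₂'X hC₂'ch
        have hch : IsChain r ((C ∩ (X₁ \ {x₁})) ∪ C₂') := by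
          refine mixChain _ _ Set.inter_subset_right hC₂'X hcmp
            (fun a ha b hb hab => ?_) hC₂'ch
          rcases hCch ha.1 hb.1 hab with h | h
          · exact Or.inl (hr11 a b ha.2 hb.2 h)
          · exact Or.inr (hr11 b a hb.2 ha.2 h)
        have heq := hCmax ((C ∩ (X₁ \ {x₁})) ∪ C₂')
          (by
            intro c hc
            rcases hCS hc with h | h
            · exact Or.inl ⟨hc, h⟩
            · exact Or.inr (hC₂C₂' ⟨hc, h⟩))
          (Set.union_subset (fun a ha => Or.inl ha.2)
            (fun a ha => Or.inr (hC₂'X ha))) hch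
        apply subset_antisymm _ hC₂C₂'
        intro a ha
        have haC : a ∈ C := heq ▸ Or.inr ha
        exact ⟨haC, hC₂'X ha⟩
      · -- the splitting identity
        rw [hCsplit]
        congr 1
        ext a
        constructor
        · rintro ⟨haC, haX⟩
          exact ⟨Or.inl ⟨haC, haX⟩, haX.2⟩
        · rintro ⟨(haC | ha), hax⟩
          · exact haC
          · exact absurd ha hax
  · rintro (⟨⟨hCsub, hCch, hCmax⟩, hx₁C⟩ | ⟨C₁, C₂, ⟨hC₁sub, hC₁ch, hC₁max⟩, hx₁C₁, ⟨hC₂sub, hC₂ch, hC₂max⟩, rfl⟩)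
    · -- maximal r₁-chain avoiding x₁ is a maximal r-chain
      have hC1 : C ⊆ X₁ \ {x₁} := fun c hc => ⟨hCsub hc, fun h => hx₁C (h ▸ hc)⟩
      refine ⟨fun c hc => Or.inl (hC1 hc), ?_, ?_⟩
      · intro a ha b hb hab
        rcases hCch ha hb hab with h | h
        · exact Or.inl (Or.inl ⟨hC1 ha, hC1 hb, h⟩)
        · exact Or.inr (Or.inl ⟨hC1 hb, hC1 ha, h⟩)
      · intro C' hCC' hC'S hC'ch
        -- C' cannot meet X₂
        have hC'X₂ : ∀ y ∈ C', y ∉ X₂ := by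
          intro y hyC' hyX₂
          have : C ∪ {x₁} = C := by
            apply hCmax (C ∪ {x₁}) Set.subset_union_left
              (Set.union_subset hCsub (by simpa using hx₁))
            rintro a (haC | ha) b (hbC | hb) hab
            · exact hCch haC hbC hab
            · have hane : a ≠ y := fun h => h12 a (hCsub haC) (h ▸ hyX₂)
              rcases hC'ch (hCC' haC) hyC' hane with h | h
              · exact Or.inl (hb ▸ hr12 a y (hC1 haC) hyX₂ h)
              · exact Or.inr (hb ▸ hr21 y a hyX₂ (hC1 haC) h)
            · have hbne : b ≠ y := fun h => h12 b (hCsub hbC) (h ▸ hyX₂)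
              rcases hC'ch (hCC' hbC) hyC' hbne with h | h
              · exact Or.inr (ha ▸ hr12 b y (hC1 hbC) hyX₂ h)
              · exact Or.inl (ha ▸ hr21 y b hyX₂ (hC1 hbC) h)
            · exact absurd (ha.trans hb.symm) hab
          exact hx₁C (this ▸ (Or.inr rfl : x₁ ∈ C ∪ {x₁}))
        have hC'1 : C' ⊆ X₁ \ {x₁} := by
          intro c hc
          rcases hC'S hc with h | h
          · exact h
          · exact absurd h (hC'X₂ c hc)
        apply hCmax C' hCC' (fun c hc => (hC'1 hc).1)
        intro a ha b hb hab
        rcases hC'ch ha hb hab with h | h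
        · exact Or.inl (hr11 a b (hC'1 ha) (hC'1 hb) h)
        · exact Or.inr (hr11 b a (hC'1 hb) (hC'1 ha) h)
    · -- insertion chain case
      have hC₂ne' := hC₂ne C₂ ⟨hC₂sub, hC₂ch, hC₂max⟩
      obtain ⟨y₂, hy₂⟩ := hC₂ne'
      have hA : C₁ \ {x₁} ⊆ X₁ \ {x₁} := fun a ha => ⟨hC₁sub ha.1, ha.2⟩
      have hcmp : ∀ a ∈ C₁ \ {x₁}, r₁ a x₁ ∨ r₁ x₁ a :=
        fun a ha => hC₁ch ha.1 hx₁C₁ ha.2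
      refine ⟨Set.union_subset (fun a ha => Or.inl (hA ha))
        (fun a ha => Or.inr (hC₂sub ha)), ?_, ?_⟩
      · exact mixChain _ _ hA hC₂sub hcmp
          (fun a ha b hb hab => hC₁ch ha.1 hb.1 hab) hC₂ch
      · intro C' hCC' hC'S hC'ch
        -- C' ∩ X₂ = C₂
        have hC'X₂ : C' ∩ X₂ = C₂ := by
          apply hC₂max
          · exact fun a ha => ⟨hCC' (Or.inr ha), hC₂sub ha⟩
          · exact Set.inter_subset_right
          · rintro a ⟨haC, haX⟩ b ⟨hbC, hbX⟩ hab
            rcases hC'ch haC hbC hab with h | h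
            · exact Or.inl (hr22 a b haX hbX h)
            · exact Or.inr (hr22 b a hbX haX h)
        -- (C' ∩ (X₁ \ {x₁})) ∪ {x₁} = C₁
        have hD : (C' ∩ (X₁ \ {x₁})) ∪ {x₁} = C₁ := by
          apply hC₁max
          · rintro a ha
            by_cases hax : a = x₁
            · exact Or.inr hax
            · exact Or.inl ⟨hCC' (Or.inl ⟨ha, hax⟩), hC₁sub ha, hax⟩
          · rintro a (haC | ha)
            · exact haC.2.1
            · exact ha ▸ hx₁
          · have hcmp' : ∀ a ∈ C' ∩ (X₁ \ {x₁}), r₁ a x₁ ∨ r₁ x₁ a := by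
              rintro a ⟨haC, haX⟩
              have hane : a ≠ y₂ := fun h => h12 a haX.1 (h ▸ hC₂sub hy₂)
              rcases hC'ch haC (hCC' (Or.inr hy₂)) hane with h | h
              · exact Or.inl (hr12 a y₂ haX (hC₂sub hy₂) h)
              · exact Or.inr (hr21 y₂ a (hC₂sub hy₂) haX h)
            rintro a (haC | ha) b (hbC | hb) hab
            · rcases hC'ch haC.1 hbC.1 hab with h | h
              · exact Or.inl (hr11 a b haC.2 hbC.2 h)
              · exact Or.inr (hr11 b a hbC.2 haC.2 h)
            · rcases hcmp' a haC with h | h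
              · exact Or.inl (hb ▸ h)
              · exact Or.inr (hb ▸ h)
            · rcases hcmp' b hbC with h | h
              · exact Or.inr (ha ▸ h)
              · exact Or.inl (ha ▸ h)
            · exact absurd (ha.trans hb.symm) hab
        -- conclude C' = (C₁ \ {x₁}) ∪ C₂
        ext a
        constructor
        · intro ha
          rcases hC'S ha with h | h
          · refine Or.inl ⟨hD ▸ Or.inl ⟨ha, h⟩, h.2⟩
          · exact Or.inr (hC'X₂ ▸ ⟨ha, h⟩)
        · exact fun ha => hCC' ha
end

section
/- Given a CNF formula φ = ⋀ᵢ₌₁ⁿ cᵢ over atoms a₁, ..., aₘ where each clause cᵢ is a disjunction of literals, construct the monotone formula φ̂ = ⋀ᵢ₌₁ⁿ ĉᵢ ∧ ⋀ₖ₌₁ᵐ (aₖ ∨ ãₖ), where for each atom aₖ a fresh atom ãₖ is introduced, and ĉᵢ is obtained from cᵢ by replacing every negative literal ¬aₖ with ãₖ (positive literals unchanged). Then φ is satisfiable if and only if φ̂ has a satisfying assignment that sets exactly m of the 2m atoms {a₁,...,aₘ, ã₁,...,ãₘ} to true; moreover any satisfying assignment of φ̂ sets at least m of these atoms to true. -/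
/-- Value of a literal `(a, pol)` under assignment `v` (`pol = true` means the
positive literal `a`, `pol = false` the negated literal `¬a`). -/
def litVal {m : ℕ} (v : Fin m → Bool) (l : Fin m × Bool) : Bool :=
  if l.2 then v l.1 else !(v l.1)

/-- Satisfaction of a CNF formula (a list of clauses, each a list of
literals). -/
def cnfSat {m : ℕ} (φ : List (List (Fin m × Bool))) (v : Fin m → Bool) : Prop :=
  ∀ c ∈ φ, ∃ l ∈ c, litVal v l = true

/-- The atom of `φ̂` corresponding to a literal: a positive literal `aₖ` is
kept (`Sum.inl k`), a negative literal `¬aₖ` is replaced by the fresh atom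
`ãₖ` (`Sum.inr k`). -/
def hatAtom {m : ℕ} (l : Fin m × Bool) : Fin m ⊕ Fin m :=
  if l.2 then Sum.inl l.1 else Sum.inr l.1

/-- Satisfaction of the monotone formula
`φ̂ = ⋀ᵢ ĉᵢ ∧ ⋀ₖ (aₖ ∨ ãₖ)`. -/
def hatSat {m : ℕ} (φ : List (List (Fin m × Bool)))
    (w : Fin m ⊕ Fin m → Bool) : Prop :=
  (∀ c ∈ φ, ∃ l ∈ c, w (hatAtom l) = true) ∧
  (∀ k : Fin m, w (Sum.inl k) = true ∨ w (Sum.inr k) = true)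

/-- The number of atoms among `{a₁,…,aₘ,ã₁,…,ãₘ}` set to true by `w`. -/
def trueCount {m : ℕ} (w : Fin m ⊕ Fin m → Bool) : ℕ :=
  (Finset.univ.filter (fun x => w x = true)).card


lemma trueCount_eq {m : ℕ} (w : Fin m ⊕ Fin m → Bool) :
    trueCount w = ∑ k : Fin m,
      ((if w (Sum.inl k) = true then 1 else 0) + (if w (Sum.inr k) = true then 1 else 0)) := by
  unfold trueCount
  rw [Finset.card_filter, Fintype.sum_sum_type, ← Finset.sum_add_distrib]

lemma lower {m : ℕ} {φ : List (List (Fin m × Bool))} (w : Fin m ⊕ Fin m → Bool)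
    (hw : hatSat φ w) : m ≤ trueCount w := by
  rw [trueCount_eq]
  calc m = ∑ _k : Fin m, 1 := by simp
  _ ≤ _ := by
    apply Finset.sum_le_sum
    intro k _
    rcases hw.2 k with h | h <;> simp [h]

/-- `φ` is satisfiable iff `φ̂` has a satisfying assignment
setting exactly `m` of the `2m` atoms to true; moreover every satisfying
assignment of `φ̂` sets at least `m` atoms to true. -/
theorem cnf_reduction {m : ℕ} (φ : List (List (Fin m × Bool))) :
    ((∃ v, cnfSat φ v) ↔ ∃ w, hatSat φ w ∧ trueCount w = m) ∧
    (∀ w, hatSat φ w → m ≤ trueCount w) := by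
  constructor
  · constructor
    · rintro ⟨v, hv⟩
      refine ⟨fun x => match x with | Sum.inl k => v k | Sum.inr k => !(v k), ⟨?_, ?_⟩, ?_⟩
      · intro c hc
        obtain ⟨l, hl, hval⟩ := hv c hc
        refine ⟨l, hl, ?_⟩
        unfold hatAtom
        unfold litVal at hval
        by_cases h : l.2 <;> simp [h] at hval ⊢ <;> simp [hval]
      · intro k
        by_cases h : v k <;> simp [h]
      · rw [trueCount_eq]
        have : ∀ k : Fin m, ((if v k = true then 1 else 0) + (if (!(v k)) = true then 1 else 0)) = 1 := by
          intro k; by_cases h : v k <;> simp [h]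
        simp only [this]
        simp
    · rintro ⟨w, hw, hcount⟩
      -- exactly one of each pair is true
      have hone : ∀ k : Fin m, ((if w (Sum.inl k) = true then 1 else 0) + (if w (Sum.inr k) = true then 1 else 0)) = 1 := by
        rw [trueCount_eq] at hcount
        have hle : ∀ k ∈ Finset.univ, (1:ℕ) ≤ ((if w (Sum.inl k) = true then 1 else 0) + (if w (Sum.inr k) = true then 1 else 0)) := by
          intro k _
          rcases hw.2 k with h | h <;> simp [h]
        have := (Finset.sum_eq_sum_iff_of_le hle).mp ?_
        · intro k
          exact (this k (Finset.mem_univ k)).symm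
        · rw [hcount]; simp
      refine ⟨fun k => w (Sum.inl k), ?_⟩
      intro c hc
      obtain ⟨l, hl, hval⟩ := hw.1 c hc
      refine ⟨l, hl, ?_⟩
      unfold hatAtom at hval
      unfold litVal
      by_cases h : l.2 <;> simp [h] at hval ⊢
      · exact hval
      · have := hone l.1
        simp [hval] at this
        by_cases h2 : w (Sum.inl l.1) = true
        · simp [h2] at this
        · simpa using h2
  · exact fun w hw => lower w hw
end
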